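/- If a Markov chain with stationary probability distribution π is piecewise Harris and is also ϕ-irreducible, then it is Harris recurrent (and in fact the partition in the definition of piecewise Harris consists of a single piece equal to the whole state space). -/

import Mathlib

/-!
A closed piece `C` can never be left, so `φ`-irreducibility forces `φ Cᶜ = 0`; two disjoint
nonempty pieces would then make `φ` vanish, so the only nonempty piece is the whole space, and the
chain is Harris recurrent with respect to the stationary law `πα` of that piece. It remains to see
that `π ≪ πα`. If `πα A = 0`, stationarity of `πα` shows that `πα`-almost every state never visits
`A`. The set `H` of those states is absorbing and of full `πα`-measure, so by Harris recurrence it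
is reached almost surely from every state; stationarity of `π` then gives `π Hᶜ = 0`, whence
`π A = 0`.
-/

open MeasureTheory ProbabilityTheory Filter Set ENNReal

namespace MCMCHarris

variable {X : Type*} [MeasurableSpace X]

/-- The `n`-step transition kernel `P^n`. -/
noncomputable def iterK (P : Kernel X X) : ℕ → Kernel X X
  | 0 => Kernel.id
  | n + 1 => (iterK P n).comp P

/-- `hitLE P A n x` is the probability `P[τ_A ≤ n | X₀ = x]` that the chain started at `x`
hits `A` within the first `n` steps, where `τ_A = inf {n ≥ 1 : Xₙ ∈ A}`. -/
noncomputable def hitLE (P : Kernel X X) (A : Set X) : ℕ → X → ℝ≥0∞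
  | 0 => fun _ => 0
  | n + 1 => fun x => ∫⁻ y, (A.indicator (fun _ => 1) y + Aᶜ.indicator (hitLE P A n) y) ∂(P x)

/-- `hitProb P A x` is the probability `P[τ_A < ∞ | X₀ = x]`. -/
noncomputable def hitProb (P : Kernel X X) (A : Set X) (x : X) : ℝ≥0∞ :=
  ⨆ n, hitLE P A n x

/-- `stayLE P A n x` is the probability `P[X_k ∈ A for all 1 ≤ k ≤ n | X₀ = x]`. -/
noncomputable def stayLE (P : Kernel X X) (A : Set X) : ℕ → X → ℝ≥0∞
  | 0 => fun _ => 1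
  | n + 1 => fun x => ∫⁻ y, A.indicator (stayLE P A n) y ∂(P x)

/-- `stayProb P A x` is the probability `P[Xₙ ∈ A for all n ≥ 0 | X₀ = x]`. -/
noncomputable def stayProb (P : Kernel X X) (A : Set X) (x : X) : ℝ≥0∞ :=
  A.indicator (fun x' => ⨅ n, stayLE P A n x') x

/-- `ioProb P A x` is the probability `P[Xₙ ∈ A infinitely often | X₀ = x]`. -/
noncomputable def ioProb (P : Kernel X X) (A : Set X) (x : X) : ℝ≥0∞ :=
  ⨅ N, ∫⁻ y, hitProb P A y ∂(iterK P N x)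

/-- `pathProb P g` is the probability `P[Xₙ = g n for all n | X₀ = g 0]` that the chain
started at `g 0` follows the deterministic trajectory `g`. -/
noncomputable def pathProb (P : Kernel X X) (g : ℕ → X) : ℝ≥0∞ :=
  ⨅ N, ∏ n ∈ Finset.range N, P (g n) {g (n + 1)}

/-- Total variation distance between two measures. -/
noncomputable def tvDist (μ ν : Measure X) : ℝ :=
  ⨆ A : {A : Set X // MeasurableSet A}, |(μ A).toReal - (ν A).toReal|

/-- `π` is a stationary distribution for the kernel `P`. -/
def Stationary (P : Kernel X X) (π : Measure X) : Prop :=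
  ∀ A : Set X, MeasurableSet A → ∫⁻ x, P x A ∂π = π A

/-- The chain `P`, started from any point of `S`, is `φ`-irreducible. -/
def IrreducibleOn (P : Kernel X X) (φ : Measure X) (S : Set X) : Prop :=
  φ ≠ 0 ∧ ∀ x ∈ S, ∀ A : Set X, MeasurableSet A → 0 < φ A → 0 < hitProb P A x

/-- The chain `P` is `φ`-irreducible (from every point of `S`) for some nonzero σ-finite `φ`. -/
def PhiIrreducibleOn (P : Kernel X X) (S : Set X) : Prop :=
  ∃ φ : Measure X, SigmaFinite φ ∧ IrreducibleOn P φ S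

/-- Harris recurrence (for starting points in `S`): every set of positive `π`-measure is
reached in finite time with probability one from every `x ∈ S`. -/
def HarrisRecurrentOn (P : Kernel X X) (π : Measure X) (S : Set X) : Prop :=
  ∀ A : Set X, MeasurableSet A → 0 < π A → ∀ x ∈ S, hitProb P A x = 1

/-- There is a `D`-cycle: disjoint sets `C 0, …, C (D-1)` of positive `π`-measure through
which the chain cycles with probability one. -/
def HasCycle (P : Kernel X X) (π : Measure X) (D : ℕ) : Prop :=
  ∃ C : ℕ → Set X, (∀ i < D, MeasurableSet (C i)) ∧
    (∀ i < D, ∀ j < D, i ≠ j → Disjoint (C i) (C j)) ∧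
    (∀ i < D, 0 < π (C i)) ∧
    ∀ i < D, ∀ x ∈ C i, P x (C ((i + 1) % D)) = 1

/-- The period of the chain is `D`: `D` is the largest positive integer admitting a `D`-cycle. -/
def IsPeriod (P : Kernel X X) (π : Measure X) (D : ℕ) : Prop :=
  0 < D ∧ HasCycle P π D ∧ ∀ D' : ℕ, 0 < D' → HasCycle P π D' → D' ≤ D

/-- The chain is aperiodic: its period is `1`. -/
def Aperiodic (P : Kernel X X) (π : Measure X) : Prop :=
  IsPeriod P π 1

/-- The Cesàro average `(1/D) ∑_{r=1}^D P^{nD+r}(x, ·)`. -/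
noncomputable def cesaro (P : Kernel X X) (D n : ℕ) (x : X) : Measure X :=
  (D : ℝ≥0∞)⁻¹ • ∑ r ∈ Finset.range D, iterK P (n * D + (r + 1)) x

end MCMCHarris

namespace MCMCHarris

open MeasureTheory ProbabilityTheory Filter Set ENNReal

/-- A chain is piecewise Harris on `S` if `S` can be partitioned into measurable, disjoint,
stochastically closed pieces on each of which the restricted chain is Harris recurrent with
respect to some stationary probability distribution supported on that piece. -/
def PiecewiseHarrisOn {X : Type*} [MeasurableSpace X] (P : Kernel X X) (S : Set X) : Prop :=
  ∃ (ι : Type) (C : ι → Set X),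
    (∀ α, MeasurableSet (C α)) ∧
    Pairwise (Function.onFun Disjoint C) ∧
    (⋃ α, C α) = S ∧
    ∀ α, (C α).Nonempty →
      (∀ x ∈ C α, P x (C α) = 1) ∧
      ∃ πα : Measure X, IsProbabilityMeasure πα ∧ πα (C α) = 1 ∧ Stationary P πα ∧
        ∀ A : Set X, MeasurableSet A → 0 < πα A → ∀ x ∈ C α, hitProb P A x = 1

end MCMCHarris

open MCMCHarris MeasureTheory ProbabilityTheory Filter Set ENNReal

namespace MCMCHarris

variable {X : Type*} [MeasurableSpace X]

def IsAbsorbing (P : Kernel X X) (H : Set X) : Prop :=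
  ∀ x ∈ H, P x H = 1

def neverVisits (P : Kernel X X) (A : Set X) : Set X :=
  Aᶜ ∩ {x | hitProb P A x = 0}

section Kernel

variable (P : Kernel X X)

instance [IsMarkovKernel P] (n : ℕ) : IsMarkovKernel (iterK P n) := by
  induction n with
  | zero => exact inferInstanceAs (IsMarkovKernel Kernel.id)
  | succ n ih => exact Kernel.IsMarkovKernel.comp _ _

lemma iterK_zero_apply (x : X) : iterK P 0 x = Measure.dirac x :=
  Kernel.id_apply x

lemma iterK_succ_apply (n : ℕ) (x : X) {A : Set X} (hA : MeasurableSet A) :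
    iterK P (n + 1) x A = ∫⁻ y, iterK P n y A ∂P x :=
  Kernel.comp_apply' _ _ _ hA

lemma measurable_indicator_add_indicator {A : Set X} (hA : MeasurableSet A) {f : X → ℝ≥0∞}
    (hf : Measurable f) : Measurable fun y => A.indicator (fun _ => 1) y + Aᶜ.indicator f y :=
  (measurable_const.indicator hA).add (hf.indicator hA.compl)

lemma measurable_hitLE {A : Set X} (hA : MeasurableSet A) : ∀ n, Measurable (hitLE P A n)
  | 0 => measurable_const
  | n + 1 => (measurable_indicator_add_indicator hA (measurable_hitLE hA n)).lintegral_kernel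

lemma measurable_hitProb {A : Set X} (hA : MeasurableSet A) : Measurable (hitProb P A) :=
  .iSup (measurable_hitLE P hA)

lemma hitLE_mono (A : Set X) : Monotone (hitLE P A) := by
  refine monotone_nat_of_le_succ fun n => ?_
  induction n with
  | zero => exact fun _ => zero_le
  | succ n ih =>
    exact fun x => lintegral_mono fun y => add_le_add le_rfl (indicator_le_indicator (ih y))

lemma hitLE_succ_eq_zero_iff {A : Set X} (hA : MeasurableSet A) {n : ℕ} {x : X} :
    hitLE P A (n + 1) x = 0 ↔ ∀ᵐ y ∂P x, y ∉ A ∧ hitLE P A n y = 0 := by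
  rw [hitLE, lintegral_eq_zero_iff
    (measurable_indicator_add_indicator hA (measurable_hitLE P hA n))]
  refine Filter.eventually_congr (.of_forall fun y => ?_)
  by_cases hy : y ∈ A <;> simp [hy]

lemma hitProb_eq_zero_iff {A : Set X} {x : X} : hitProb P A x = 0 ↔ ∀ n, hitLE P A n x = 0 :=
  iSup_eq_zero

end Kernel

namespace IsAbsorbing

variable {P : Kernel X X} [IsMarkovKernel P] {H : Set X}

lemma ae_mem (hH : MeasurableSet H) (habs : IsAbsorbing P H) {x : X} (hx : x ∈ H) :
    ∀ᵐ y ∂P x, y ∈ H :=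
  mem_ae_iff.mpr ((prob_compl_eq_zero_iff hH).mpr (habs x hx))

lemma iterK_apply_eq_one (hH : MeasurableSet H) (habs : IsAbsorbing P H) :
    ∀ n, ∀ x ∈ H, iterK P n x H = 1
  | 0, x, hx => by simp [iterK_zero_apply, hx]
  | n + 1, x, hx => by
    rw [iterK_succ_apply P n x hH]
    calc ∫⁻ y, iterK P n y H ∂P x = ∫⁻ _, 1 ∂P x := by
          refine lintegral_congr_ae ?_
          filter_upwards [habs.ae_mem hH hx] with y hy using iterK_apply_eq_one hH habs n y hy
      _ = 1 := by simp

lemma hitLE_le_iterK (hH : MeasurableSet H) (habs : IsAbsorbing P H) :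
    ∀ n x, hitLE P H n x ≤ iterK P n x H
  | 0, _ => zero_le
  | n + 1, x => by
    rw [iterK_succ_apply P n x hH]
    refine lintegral_mono fun y => ?_
    by_cases hy : y ∈ H
    · simp [hy, habs.iterK_apply_eq_one hH n y hy]
    · simpa [hy] using hitLE_le_iterK hH habs n y

lemma hitProb_compl_eq_zero (hH : MeasurableSet H) (habs : IsAbsorbing P H) {x : X}
    (hx : x ∈ H) : hitProb P Hᶜ x = 0 := by
  suffices ∀ n, ∀ x ∈ H, hitLE P Hᶜ n x = 0 from (hitProb_eq_zero_iff P).mpr fun n => this n x hx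
  intro n
  induction n with
  | zero => exact fun _ _ => rfl
  | succ n ih =>
    intro x hx
    rw [hitLE_succ_eq_zero_iff P hH.compl]
    filter_upwards [habs.ae_mem hH hx] with y hy using ⟨not_not.mpr hy, ih y hy⟩

end IsAbsorbing

lemma measurableSet_neverVisits (P : Kernel X X) {A : Set X} (hA : MeasurableSet A) :
    MeasurableSet (neverVisits P A) :=
  hA.compl.inter (measurable_hitProb P hA (measurableSet_singleton 0))

lemma isAbsorbing_neverVisits (P : Kernel X X) [IsMarkovKernel P] {A : Set X}
    (hA : MeasurableSet A) : IsAbsorbing P (neverVisits P A) := by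
  intro x hx
  have hvisit : ∀ n, ∀ᵐ y ∂P x, y ∉ A ∧ hitLE P A n y = 0 := fun n =>
    (hitLE_succ_eq_zero_iff P hA).mp ((hitProb_eq_zero_iff P).mp hx.2 (n + 1))
  rw [← prob_compl_eq_zero_iff (measurableSet_neverVisits P hA), ← mem_ae_iff]
  filter_upwards [ae_all_iff.mpr hvisit] with y hy
  exact ⟨(hy 0).1, (hitProb_eq_zero_iff P).mpr fun n => (hy n).2⟩

namespace Stationary

variable {P : Kernel X X} {π : Measure X}

lemma bind_eq (h : Stationary P π) : π.bind P = π :=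
  Measure.ext fun A hA => by rw [Measure.bind_apply hA P.measurable.aemeasurable]; exact h A hA

lemma lintegral_lintegral (h : Stationary P π) {f : X → ℝ≥0∞} (hf : Measurable f) :
    ∫⁻ x, ∫⁻ y, f y ∂P x ∂π = ∫⁻ y, f y ∂π := by
  conv_rhs => rw [← h.bind_eq]
  exact (Measure.lintegral_bind P.measurable.aemeasurable hf.aemeasurable).symm

lemma lintegral_iterK_apply (h : Stationary P π) {A : Set X} (hA : MeasurableSet A) :
    ∀ n, ∫⁻ x, iterK P n x A ∂π = π A
  | 0 => by simp_rw [iterK_zero_apply, Measure.dirac_apply' _ hA, lintegral_indicator_one hA]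
  | n + 1 => by
    simp_rw [iterK_succ_apply P n _ hA]
    rw [h.lintegral_lintegral (Kernel.measurable_coe _ hA), h.lintegral_iterK_apply hA n]

lemma lintegral_hitLE_eq_zero (h : Stationary P π) {A : Set X} (hA : MeasurableSet A)
    (h0 : π A = 0) : ∀ n, ∫⁻ x, hitLE P A n x ∂π = 0
  | 0 => lintegral_zero
  | n + 1 => by
    refine le_antisymm ?_ zero_le
    calc ∫⁻ x, hitLE P A (n + 1) x ∂π
        = ∫⁻ y, A.indicator (fun _ => 1) y + Aᶜ.indicator (hitLE P A n) y ∂π :=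
          h.lintegral_lintegral (measurable_indicator_add_indicator hA (measurable_hitLE P hA n))
      _ ≤ ∫⁻ y, A.indicator (fun _ => 1) y + hitLE P A n y ∂π :=
          lintegral_mono fun y => add_le_add le_rfl (indicator_le_self _ _ y)
      _ = 0 := by
          rw [lintegral_add_left (measurable_const.indicator hA), lintegral_indicator_const hA,
            h.lintegral_hitLE_eq_zero hA h0 n, h0, mul_zero, add_zero]

lemma ae_hitProb_eq_zero (h : Stationary P π) {A : Set X} (hA : MeasurableSet A)
    (h0 : π A = 0) : ∀ᵐ x ∂π, hitProb P A x = 0 := by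
  have hzero := fun n =>
    (lintegral_eq_zero_iff (measurable_hitLE P hA n)).mp (h.lintegral_hitLE_eq_zero hA h0 n)
  filter_upwards [ae_all_iff.mpr hzero] with x hx using (hitProb_eq_zero_iff P).mpr hx

lemma measure_compl_neverVisits (h : Stationary P π) {A : Set X} (hA : MeasurableSet A)
    (h0 : π A = 0) : π (neverVisits P A)ᶜ = 0 := by
  rw [neverVisits, compl_inter, compl_compl]
  exact measure_union_null h0 (h.ae_hitProb_eq_zero hA h0)

lemma measure_compl_eq_zero_of_isAbsorbing [IsMarkovKernel P] [IsFiniteMeasure π]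
    (h : Stationary P π) {H : Set X} (hH : MeasurableSet H) (habs : IsAbsorbing P H)
    (hhit : ∀ x, hitProb P H x = 1) : π Hᶜ = 0 := by
  have hπH : π univ ≤ π H := calc
    π univ = ∫⁻ x, hitProb P H x ∂π := by simp [hhit]
    _ = ⨆ n, ∫⁻ x, hitLE P H n x ∂π := lintegral_iSup (measurable_hitLE P hH) (hitLE_mono P H)
    _ ≤ π H := iSup_le fun n =>
      (lintegral_mono (habs.hitLE_le_iterK hH n)).trans_eq (h.lintegral_iterK_apply hH n)
  rw [measure_compl hH (measure_ne_top _ _), tsub_eq_zero_of_le hπH]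

end Stationary

lemma HarrisRecurrentOn.absolutelyContinuous {P : Kernel X X} [IsMarkovKernel P]
    {π πα : Measure X} [IsFiniteMeasure π] [NeZero πα] (hπ : Stationary P π)
    (hπα : Stationary P πα) (hharris : HarrisRecurrentOn P πα univ) : π ≪ πα := by
  refine Measure.AbsolutelyContinuous.mk fun A hA h0 => ?_
  have hH := measurableSet_neverVisits P hA
  have hHpos : 0 < πα (neverVisits P A) := by
    rw [measure_congr (ae_eq_univ.mpr (hπα.measure_compl_neverVisits hA h0))]
    exact Measure.measure_univ_pos.mpr (NeZero.ne πα)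
  have hπH : π (neverVisits P A)ᶜ = 0 :=
    hπ.measure_compl_eq_zero_of_isAbsorbing hH (isAbsorbing_neverVisits P hA)
      fun x => hharris _ hH hHpos x (mem_univ x)
  exact measure_mono_null (show A ⊆ (neverVisits P A)ᶜ from fun x hx hxH => hxH.1 hx) hπH

namespace IrreducibleOn

variable {P : Kernel X X} [IsMarkovKernel P] {φ : Measure X} {S : Set X}

lemma measure_compl_eq_zero (hφ : IrreducibleOn P φ S) {C : Set X} (hC : MeasurableSet C)
    (habs : IsAbsorbing P C) (hne : (S ∩ C).Nonempty) : φ Cᶜ = 0 := by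
  obtain ⟨x, hxS, hxC⟩ := hne
  by_contra h
  have hpos := hφ.2 x hxS Cᶜ hC.compl (pos_iff_ne_zero.mpr h)
  rw [habs.hitProb_compl_eq_zero hC hxC] at hpos
  exact lt_irrefl 0 hpos

lemma not_disjoint (hφ : IrreducibleOn P φ S) {C D : Set X} (hC : MeasurableSet C)
    (hD : MeasurableSet D) (habsC : IsAbsorbing P C) (habsD : IsAbsorbing P D)
    (hCne : (S ∩ C).Nonempty) (hDne : (S ∩ D).Nonempty) : ¬Disjoint C D := by
  intro hdisj
  have hφD : φ D = 0 :=
    measure_mono_null hdisj.symm.subset_compl_right (hφ.measure_compl_eq_zero hC habsC hCne)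
  apply hφ.1
  rw [← Measure.measure_univ_eq_zero, ← union_compl_self D]
  exact measure_union_null hφD (hφ.measure_compl_eq_zero hD habsD hDne)

lemma eq_univ_of_partition (hφ : IrreducibleOn P φ univ) {ι : Type*} {C : ι → Set X}
    (hCmeas : ∀ α, MeasurableSet (C α)) (hCdisj : Pairwise (Function.onFun Disjoint C))
    (hCcover : ⋃ α, C α = univ) (habs : ∀ α, (C α).Nonempty → IsAbsorbing P (C α)) {α : ι}
    (hα : (C α).Nonempty) : C α = univ := by
  refine eq_univ_of_forall fun y => ?_
  obtain ⟨β, hyβ⟩ := mem_iUnion.mp (hCcover.symm ▸ mem_univ y)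
  have hβ : (C β).Nonempty := ⟨y, hyβ⟩
  obtain rfl : α = β := by_contra fun hne =>
    hφ.not_disjoint (hCmeas α) (hCmeas β) (habs α hα) (habs β hβ)
      (by rwa [univ_inter]) (by rwa [univ_inter]) (hCdisj hne)
  exact hyβ

end IrreducibleOn

end MCMCHarris

open MCMCHarris MeasureTheory ProbabilityTheory Filter Set ENNReal

/-- Proposition 15. If a Markov chain with stationary probability
distribution `π` is piecewise Harris — witnessed by a partition `C` of the state space into
measurable, disjoint, stochastically closed pieces on which the restricted chains are Harris
recurrent — and is also ϕ-irreducible, then it is Harris recurrent; moreover every nonempty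
piece of the partition is the whole state space. -/
theorem prop15_piecewise_harris_irreducible {X : Type*} [MeasurableSpace X]
    (P : Kernel X X) [IsMarkovKernel P] (π : Measure X) [IsProbabilityMeasure π]
    (hstat : Stationary P π)
    (hirr : PhiIrreducibleOn P Set.univ)
    (ι : Type) (C : ι → Set X)
    (hCmeas : ∀ α, MeasurableSet (C α))
    (hCdisj : Pairwise (Function.onFun Disjoint C))
    (hCcover : (⋃ α, C α) = Set.univ)
    (hCpieces : ∀ α, (C α).Nonempty →
      (∀ x ∈ C α, P x (C α) = 1) ∧
      ∃ πα : Measure X, IsProbabilityMeasure πα ∧ πα (C α) = 1 ∧ Stationary P πα ∧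
        ∀ A : Set X, MeasurableSet A → 0 < πα A → ∀ x ∈ C α, hitProb P A x = 1) :
    HarrisRecurrentOn P π Set.univ ∧ ∀ α, (C α).Nonempty → C α = Set.univ := by
  obtain ⟨φ, -, hφ⟩ := hirr
  have hpiece : ∀ α, (C α).Nonempty → C α = univ := fun α hα =>
    hφ.eq_univ_of_partition hCmeas hCdisj hCcover (fun β hβ => (hCpieces β hβ).1) hα
  refine ⟨fun A hA hπA x _ => ?_, hpiece⟩
  obtain ⟨α, hxα⟩ := mem_iUnion.mp (hCcover.symm ▸ mem_univ x)
  obtain ⟨-, πα, hπα, -, hstatα, hharris⟩ := hCpieces α ⟨x, hxα⟩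
  have hharris : HarrisRecurrentOn P πα univ := hpiece α ⟨x, hxα⟩ ▸ hharris
  exact hharris A hA ((hharris.absolutelyContinuous hstat hstatα).pos_mono hπA) x (mem_univ x)
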